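/- arXiv:2006.00717 — 5 statements merged into one kernel-verified Lean document; each statement's English description precedes it below -/
import Mathlib

section
/- Let r₁>0>s₁ be reals. Define g(x)=e^{r₁x}−e^{s₁x} and the function h(x) = g'(x)·e^{s₁ l} − s₁·g(l)·e^{s₁ x} − (r₁−s₁)e^{(r₁+s₁)x} for a fixed l ≥ 0. Then for all x > l, h(x) > 0. -/
open Real

lemma f_pos_aux (r s t : ℝ) (hr : 0 < r) (hs : s < 0) (ht : 0 < t) :
    0 < r * exp (r * t) - s * exp (s * t) - (r - s) * (exp (r * t) * exp (s * t)) := by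
  have h1 : -(s * t) + 1 < exp (-(s * t)) :=
    Real.add_one_lt_exp (by nlinarith)
  have h2 : -(r * t) + 1 < exp (-(r * t)) :=
    Real.add_one_lt_exp (by nlinarith)
  have hu : 0 < exp (r * t) := exp_pos _
  have hv : 0 < exp (s * t) := exp_pos _
  have hu1 : exp (-(r * t)) * exp (r * t) = 1 := by
    rw [← exp_add]; simp
  have hv1 : exp (-(s * t)) * exp (s * t) = 1 := by
    rw [← exp_add]; simp
  -- From h1: r * u * (exp(-(s t)) - 1) > r * u * (-(s t))
  -- i.e. r*u - r*u*v > -s*t*r*u*v  (after multiplying by v)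
  have k1 : r * exp (r * t) * (1 - exp (s * t)) >
      (-(s * t)) * (exp (r * t) * exp (s * t)) * r := by
    have e : r * exp (r * t) * exp (s * t) * exp (-(s * t)) = r * exp (r * t) := by
      rw [mul_assoc, ← exp_add]; simp
    have := mul_lt_mul_of_pos_left h1 (mul_pos (mul_pos hr hu) hv)
    nlinarith [mul_pos hu hv]
  have k2 : (-s) * exp (s * t) * (exp (r * t) - 1) <
      (r * t) * (exp (r * t) * exp (s * t)) * (-s) := by
    have e : -s * exp (r * t) * exp (s * t) * exp (-(r * t)) = -s * exp (s * t) := by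
      rw [show -s * exp (r*t) * exp (s*t) * exp (-(r*t)) = -s * exp (s*t) * (exp (r*t) * exp (-(r*t))) by ring, ← exp_add]
      simp
    have := mul_lt_mul_of_pos_left h2 (mul_pos (mul_pos (neg_pos.mpr hs) hu) hv)
    nlinarith [mul_pos hu hv]
  nlinarith [mul_pos hu hv]

theorem h_pos_of_gt
    (r₁ s₁ l : ℝ) (hr : 0 < r₁) (hs : s₁ < 0) (hsum : r₁ + s₁ < 0) (hl : 0 ≤ l) :
    ∀ x : ℝ, l < x →
      0 < (r₁ * exp (r₁ * x) - s₁ * exp (s₁ * x)) * exp (s₁ * l)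
            - s₁ * (exp (r₁ * l) - exp (s₁ * l)) * exp (s₁ * x)
            - (r₁ - s₁) * exp ((r₁ + s₁) * x) := by
  intro x hx
  have ht : 0 < x - l := by linarith
  have key := f_pos_aux r₁ s₁ (x - l) hr hs ht
  have e1 : exp (r₁ * x) = exp (r₁ * (x - l)) * exp (r₁ * l) := by
    rw [← exp_add]; ring_nf
  have e2 : exp (s₁ * x) = exp (s₁ * (x - l)) * exp (s₁ * l) := by
    rw [← exp_add]; ring_nf
  have e3 : exp ((r₁ + s₁) * x) =
      exp (r₁ * (x - l)) * exp (s₁ * (x - l)) * (exp (r₁ * l) * exp (s₁ * l)) := by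
    rw [← exp_add, ← exp_add, ← exp_add]; ring_nf
  rw [e1, e2, e3]
  have hpl : 0 < exp (r₁ * l) * exp (s₁ * l) := mul_pos (exp_pos _) (exp_pos _)
  nlinarith [mul_pos key hpl]
end

section
/- Let μ<0, γ>0, δ>0, σ>0, β ∈ (0,1], χ>0, and let s₁<0 be the negative root of (σ²/2)θ²+μθ−(γ+δ)=0. Define g(x)=e^{r₁x}−e^{s₁x} and A(b) = [ (β − γ/(γ+δ))b − χ − (γμ/(γ+δ)²)(1 − e^{s₁b}) ] / g(b) for b>0. If β ≤ γ/(γ+δ), then A(χ/β) < 0. -/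
open Real

theorem A_at_chi_over_beta_neg
    (μ γ δ σ β χ r₁ s₁ : ℝ) (hμ : μ < 0) (hγ : 0 < γ) (hδ : 0 < δ) (hσ : 0 < σ)
    (hβ0 : 0 < β) (hβ1 : β ≤ 1) (hχ : 0 < χ)
    (hr : 0 < r₁) (hs : s₁ < 0)
    (hroot_r : σ^2 / 2 * r₁^2 + μ * r₁ - (γ + δ) = 0)
    (hroot_s : σ^2 / 2 * s₁^2 + μ * s₁ - (γ + δ) = 0)
    (hβle : β ≤ γ / (γ + δ)) :
    ((β - γ / (γ + δ)) * (χ / β) - χ - γ * μ / (γ + δ)^2 * (1 - exp (s₁ * (χ / β))))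
      / (exp (r₁ * (χ / β)) - exp (s₁ * (χ / β))) < 0 := by
  have hγδ : 0 < γ + δ := by linarith
  set x := χ / β with hxdef
  have hx0 : 0 < x := div_pos hχ hβ0
  have hden : 0 < exp (r₁ * x) - exp (s₁ * x) := by
    have h : s₁ * x < r₁ * x := by nlinarith
    simpa using sub_pos.mpr (exp_lt_exp.mpr h)
  apply div_neg_of_neg_of_pos _ hden
  have hβx : β * x = χ := by
    rw [hxdef]; field_simp
  set E := exp (s₁ * x) with hE
  have hEgt : s₁ * x + 1 < E := add_one_lt_exp (by nlinarith)
  have hs2 : 0 < s₁ ^ 2 := by nlinarith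
  have hμs : μ * s₁ < γ + δ := by
    have := mul_pos (show (0:ℝ) < σ^2/2 by positivity) hs2
    linarith
  -- key : -μ*(1-E) < (γ+δ)*x
  have h1 : 0 < (γ + δ) * x + μ * (1 - E) := by nlinarith
  have heq : (β - γ / (γ + δ)) * x - χ - γ * μ / (γ + δ)^2 * (1 - E)
      = -(γ / (γ + δ)^2) * ((γ + δ) * x + μ * (1 - E)) + (β * x - χ) := by
    field_simp
    ring
  rw [heq, hβx, sub_self, add_zero]
  have : 0 < γ / (γ + δ)^2 := by positivity
  nlinarith
end

section
/- Let r₁>0>s₁, and fix a>0 parameters f(a)>0, f'(a)>0 (with f(x)=e^{r₀x}−e^{s₀x} for roots r₀>0>s₀ of a quadratic with smaller constant term). Define G(a,x) = g(x)·(f'(a) − s₁(δ/(γ+δ))f(a))/(r₁−s₁) + e^{s₁x}(δ/(γ+δ))f(a) + (γ/(γ+δ))f(a) and J(x) = −s₁g(x) + (r₁−s₁)(e^{s₁x}−1), where g(x)=e^{r₁x}−e^{s₁x}. Then for all x>0, J(x)·∂ₓG(a,x) − G(a,x)·J'(x) = −f'(a)·(g'(x) − (r₁−s₁)e^{(r₁+s₁)x})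 + s₁f(a)r₁g(x) < 0. -/
open Real

theorem key_identity_neg
    (r₁ s₁ γ δ fa fpa : ℝ) (hr : 0 < r₁) (hs : s₁ < 0)
    (hγ : 0 < γ) (hδ : 0 < δ) (hfa : 0 ≤ fa) (hfpa : 0 < fpa) :
    ∀ x : ℝ, 0 < x →
      ((-s₁ * (exp (r₁ * x) - exp (s₁ * x)) + (r₁ - s₁) * (exp (s₁ * x) - 1)) *
          deriv (fun x : ℝ =>
            (exp (r₁ * x) - exp (s₁ * x)) * ((fpa - s₁ * (δ / (γ + δ)) * fa) / (r₁ - s₁))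
              + exp (s₁ * x) * (δ / (γ + δ)) * fa + γ / (γ + δ) * fa) x
        - ((exp (r₁ * x) - exp (s₁ * x)) * ((fpa - s₁ * (δ / (γ + δ)) * fa) / (r₁ - s₁))
              + exp (s₁ * x) * (δ / (γ + δ)) * fa + γ / (γ + δ) * fa) *
          deriv (fun x : ℝ =>
            -s₁ * (exp (r₁ * x) - exp (s₁ * x)) + (r₁ - s₁) * (exp (s₁ * x) - 1)) x
        = -fpa * ((r₁ * exp (r₁ * x) - s₁ * exp (s₁ * x)) - (r₁ - s₁) * exp ((r₁ + s₁) * x))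
            + s₁ * fa * r₁ * (exp (r₁ * x) - exp (s₁ * x))) ∧
      (-fpa * ((r₁ * exp (r₁ * x) - s₁ * exp (s₁ * x)) - (r₁ - s₁) * exp ((r₁ + s₁) * x))
            + s₁ * fa * r₁ * (exp (r₁ * x) - exp (s₁ * x)) < 0) := by
  intro x hx
  have hrs : (0:ℝ) < r₁ - s₁ := by linarith
  have hγδ : (0:ℝ) < γ + δ := by linarith
  have E : ∀ c : ℝ, HasDerivAt (fun y : ℝ => exp (c * y)) (exp (c * x) * c) x := fun c => by
    simpa using ((hasDerivAt_id x).const_mul c).exp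
  constructor
  · have hG : HasDerivAt (fun y : ℝ =>
        (exp (r₁ * y) - exp (s₁ * y)) * ((fpa - s₁ * (δ / (γ + δ)) * fa) / (r₁ - s₁))
          + exp (s₁ * y) * (δ / (γ + δ)) * fa + γ / (γ + δ) * fa)
        ((exp (r₁ * x) * r₁ - exp (s₁ * x) * s₁) * ((fpa - s₁ * (δ / (γ + δ)) * fa) / (r₁ - s₁))
          + exp (s₁ * x) * s₁ * (δ / (γ + δ)) * fa) x := by
      have := ((((E r₁).sub (E s₁)).mul_const
          ((fpa - s₁ * (δ / (γ + δ)) * fa) / (r₁ - s₁))).add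
          (((E s₁).mul_const (δ / (γ + δ))).mul_const fa)).add_const (γ / (γ + δ) * fa)
      exact this
    have hJ : HasDerivAt (fun y : ℝ =>
        -s₁ * (exp (r₁ * y) - exp (s₁ * y)) + (r₁ - s₁) * (exp (s₁ * y) - 1))
        (-s₁ * (exp (r₁ * x) * r₁ - exp (s₁ * x) * s₁) + (r₁ - s₁) * (exp (s₁ * x) * s₁)) x := by
      have := (((E r₁).sub (E s₁)).const_mul (-s₁)).add
          (((E s₁).sub_const 1).const_mul (r₁ - s₁))
      exact this
    rw [hG.deriv, hJ.deriv]
    have hexp : exp ((r₁ + s₁) * x) = exp (r₁ * x) * exp (s₁ * x) := by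
      rw [← exp_add]; ring_nf
    rw [hexp]
    field_simp
    ring
  · -- negativity
    have hgpos : 0 < exp (r₁ * x) - exp (s₁ * x) := by
      have : s₁ * x < r₁ * x := by nlinarith
      simpa using exp_lt_exp.mpr this
    have hEpos : 0 < exp ((r₁ + s₁) * x) := exp_pos _
    have h1 : (-s₁ * x) + 1 < exp (-s₁ * x) := by
      exact add_one_lt_exp (by nlinarith : -s₁ * x ≠ 0)
    have h2 : (-r₁ * x) + 1 ≤ exp (-r₁ * x) := add_one_le_exp _
    have key : 0 < r₁ * (exp (-s₁ * x) - 1) + (-s₁) * (exp (-r₁ * x) - 1) := by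
      nlinarith [mul_lt_mul_of_pos_left h1 hr,
        mul_le_mul_of_nonneg_left h2 (le_of_lt (neg_pos.mpr hs))]
    have hA : exp (r₁ * x) = exp ((r₁ + s₁) * x) * exp (-s₁ * x) := by
      rw [← exp_add]; ring_nf
    have hB : exp (s₁ * x) = exp ((r₁ + s₁) * x) * exp (-r₁ * x) := by
      rw [← exp_add]; ring_nf
    have hpos : 0 < (r₁ * exp (r₁ * x) - s₁ * exp (s₁ * x)) - (r₁ - s₁) * exp ((r₁ + s₁) * x) := by
      rw [hA, hB]
      nlinarith [mul_pos hEpos key]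
    have h3 : 0 ≤ -s₁ * fa * r₁ * (exp (r₁ * x) - exp (s₁ * x)) :=
      mul_nonneg (mul_nonneg (mul_nonneg (neg_nonneg.mpr hs.le) hfa) hr.le) hgpos.le
    nlinarith [mul_pos hfpa hpos]
end

section
/- Under the hypotheses of the previous identity (r₁>0>s₁, f(a)≥0, f'(a)>0, γ,δ>0), the map x ↦ G(a,x)/J(x) is strictly decreasing on (0,∞). -/
open Real Set

private lemma hexp_deriv (c x : ℝ) : HasDerivAt (fun y : ℝ => exp (c * y)) (c * exp (c * x)) x := by
  simpa [mul_comm] using ((hasDerivAt_id x).const_mul c).exp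

/-- helper: f(0)=0 and f' > 0 on Ioi 0, f continuous ⇒ f x > 0 for x > 0 -/
private lemma psi_pos {r s : ℝ} (hr : 0 < r) (hs : s < 0) {x : ℝ} (hx : 0 < x) :
    (r - s) * exp (r * x) < r * exp ((r - s) * x) - s := by
  set f : ℝ → ℝ := fun y => r * exp ((r - s) * y) - s - (r - s) * exp (r * y) with hf
  have hmono : StrictMonoOn f (Ici 0) := by
    apply strictMonoOn_of_deriv_pos (convex_Ici 0)
    · fun_prop
    · intro y hy
      rw [interior_Ici] at hy
      have hd : HasDerivAt f (r * ((r - s) * exp ((r - s) * y)) - (r - s) * (r * exp (r * y))) y :=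
        (((hexp_deriv (r - s) y).const_mul r).sub_const s).sub ((hexp_deriv r y).const_mul (r - s))
      rw [hd.deriv]
      have hy0 : (0:ℝ) < y := hy
      have h1 : exp (r * y) < exp ((r - s) * y) := by
        apply exp_lt_exp.mpr
        nlinarith [mul_pos (neg_pos.mpr hs) hy0]
      nlinarith [mul_pos (mul_pos hr (by linarith : (0:ℝ) < r - s)) (sub_pos.mpr h1)]
  have h0 : f 0 = 0 := by simp [hf]
  have := hmono (Set.mem_Ici.mpr (le_refl (0:ℝ))) (Set.mem_Ici.mpr (le_of_lt hx)) hx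
  rw [h0] at this
  simp only [hf] at this
  linarith

private lemma J_pos {r s : ℝ} (hr : 0 < r) (hs : s < 0) {x : ℝ} (hx : 0 < x) :
    0 < -s * (exp (r * x) - exp (s * x)) + (r - s) * (exp (s * x) - 1) := by
  set f : ℝ → ℝ := fun y => -s * (exp (r * y) - exp (s * y)) + (r - s) * (exp (s * y) - 1) with hf
  have hmono : StrictMonoOn f (Ici 0) := by
    apply strictMonoOn_of_deriv_pos (convex_Ici 0)
    · fun_prop
    · intro y hy
      rw [interior_Ici] at hy
      have hd : HasDerivAt f (-s * (r * exp (r * y) - s * exp (s * y)) + (r - s) * (s * exp (s * y))) y :=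
        (((hexp_deriv r y).sub (hexp_deriv s y)).const_mul (-s)).add
          (((hexp_deriv s y).sub_const 1).const_mul (r - s))
      rw [hd.deriv]
      have hy0 : (0:ℝ) < y := hy
      have h1 : exp (s * y) < exp (r * y) := by
        apply exp_lt_exp.mpr
        nlinarith [mul_pos hr hy0, mul_neg_of_neg_of_pos hs hy0]
      nlinarith [mul_pos (mul_pos hr (neg_pos.mpr hs)) (sub_pos.mpr h1)]
  have h0 : f 0 = 0 := by simp [hf]
  have := hmono (Set.mem_Ici.mpr (le_refl (0:ℝ))) (Set.mem_Ici.mpr (le_of_lt hx)) hx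
  rw [h0] at this
  exact this

theorem G_over_J_strictAnti
    (r₁ s₁ γ δ fa fpa : ℝ) (hr : 0 < r₁) (hs : s₁ < 0)
    (hγ : 0 < γ) (hδ : 0 < δ) (hfa : 0 ≤ fa) (hfpa : 0 < fpa) :
    StrictAntiOn
      (fun x : ℝ =>
        ((exp (r₁ * x) - exp (s₁ * x)) * ((fpa - s₁ * (δ / (γ + δ)) * fa) / (r₁ - s₁))
            + exp (s₁ * x) * (δ / (γ + δ)) * fa + γ / (γ + δ) * fa)
          / (-s₁ * (exp (r₁ * x) - exp (s₁ * x)) + (r₁ - s₁) * (exp (s₁ * x) - 1)))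
      (Set.Ioi 0) := by
  set C : ℝ := (fpa - s₁ * (δ / (γ + δ)) * fa) / (r₁ - s₁) with hCdef
  set D : ℝ := δ / (γ + δ) * fa with hDdef
  set E : ℝ := γ / (γ + δ) * fa with hEdef
  have hrs : 0 < r₁ - s₁ := by linarith
  have hD : 0 ≤ D := by positivity
  have hE : 0 ≤ E := by positivity
  have hC : 0 < C := by
    apply div_pos _ hrs
    nlinarith [mul_nonneg (mul_nonneg (le_of_lt (div_pos hδ (by linarith : (0:ℝ) < γ + δ))) hfa) (le_of_lt (neg_pos.mpr hs))]
  apply strictAntiOn_of_deriv_neg (convex_Ioi 0)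
  · apply ContinuousOn.div
    · fun_prop
    · fun_prop
    · intro x hx
      exact ne_of_gt (J_pos hr hs hx)
  · intro x hx
    rw [interior_Ioi] at hx
    set u : ℝ := exp (r₁ * x) with hu
    set v : ℝ := exp (s₁ * x) with hv
    have hJx : 0 < -s₁ * (u - v) + (r₁ - s₁) * (v - 1) := J_pos hr hs hx
    have hGd : HasDerivAt (fun y : ℝ =>
        (exp (r₁ * y) - exp (s₁ * y)) * C + exp (s₁ * y) * (δ / (γ + δ)) * fa + γ / (γ + δ) * fa)
        ((r₁ * u - s₁ * v) * C + s₁ * v * (δ / (γ + δ)) * fa) x := by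
      exact ((((hexp_deriv r₁ x).sub (hexp_deriv s₁ x)).mul_const C).add
        (((hexp_deriv s₁ x).mul_const (δ / (γ + δ))).mul_const fa)).add_const (γ / (γ + δ) * fa)
    have hJd : HasDerivAt (fun y : ℝ =>
        -s₁ * (exp (r₁ * y) - exp (s₁ * y)) + (r₁ - s₁) * (exp (s₁ * y) - 1))
        (-s₁ * (r₁ * u - s₁ * v) + (r₁ - s₁) * (s₁ * v)) x := by
      exact (((hexp_deriv r₁ x).sub (hexp_deriv s₁ x)).const_mul (-s₁)).add
        (((hexp_deriv s₁ x).sub_const 1).const_mul (r₁ - s₁))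
    have hQd := hGd.div hJd (ne_of_gt hJx)
    have hQd' : HasDerivAt (fun y : ℝ =>
        ((exp (r₁ * y) - exp (s₁ * y)) * C + exp (s₁ * y) * (δ / (γ + δ)) * fa + E) /
          (-s₁ * (exp (r₁ * y) - exp (s₁ * y)) + (r₁ - s₁) * (exp (s₁ * y) - 1))) _ x := hQd
    rw [hQd'.deriv]
    apply div_neg_of_neg_of_pos _ (by positivity)
    -- key inequality: (r₁-s₁)*u*v < r₁*u - s₁*v
    have hB : (r₁ - s₁) * u * v < r₁ * u - s₁ * v := by
      have := psi_pos hr hs hx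
      have hmul := mul_lt_mul_of_pos_right this (exp_pos (s₁ * x))
      have hev : exp ((r₁ - s₁) * x) * exp (s₁ * x) = exp (r₁ * x) := by
        rw [← exp_add]; ring_nf
      nlinarith [hmul, hev, exp_pos (s₁ * x)]
    have hx0 : (0:ℝ) < x := hx
    have hsx : s₁ * x < 0 := mul_neg_of_neg_of_pos hs hx0
    have hrx : 0 < r₁ * x := mul_pos hr hx0
    have hu1 : 1 < u := by
      rw [hu, show (1:ℝ) = exp 0 by simp]; exact exp_lt_exp.mpr hrx
    have hv1 : v < 1 := by
      rw [hv, show (1:ℝ) = exp 0 by simp]; exact exp_lt_exp.mpr hsx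
    have hv0 : 0 < v := exp_pos _
    have huv : v < u := by
      rw [hu, hv]; exact exp_lt_exp.mpr (by linarith)
    have e1 : (r₁ - s₁) * C * ((r₁ - s₁) * u * v - r₁ * u + s₁ * v) < 0 :=
      mul_neg_of_pos_of_neg (by positivity) (by linarith)
    have e2 : s₁ * (r₁ - s₁) * (D * v * (u - 1)) ≤ 0 :=
      mul_nonpos_of_nonpos_of_nonneg (mul_nonpos_of_nonpos_of_nonneg hs.le hrs.le)
        (mul_nonneg (mul_nonneg hD hv0.le) (by linarith))
    have e3 : s₁ * r₁ * (E * (u - v)) ≤ 0 :=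
      mul_nonpos_of_nonpos_of_nonneg (mul_nonpos_of_nonpos_of_nonneg hs.le hr.le)
        (mul_nonneg hE (by linarith))
    have key : ((r₁ * u - s₁ * v) * C + s₁ * v * (δ / (γ + δ)) * fa) *
          (-s₁ * (u - v) + (r₁ - s₁) * (v - 1)) -
        ((u - v) * C + v * (δ / (γ + δ)) * fa + γ / (γ + δ) * fa) *
          (-s₁ * (r₁ * u - s₁ * v) + (r₁ - s₁) * (s₁ * v)) =
        (r₁ - s₁) * C * ((r₁ - s₁) * u * v - r₁ * u + s₁ * v) +
        s₁ * (r₁ - s₁) * (D * v * (u - 1)) + s₁ * r₁ * (E * (u - v)) := by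
      rw [hDdef, hEdef]; ring
    linarith [key, e1, e2, e3]
end

section
/- Let V: [0,∞) → ℝ be continuously differentiable with V(0)=0 and suppose there exist 0 ≤ a_c < b and β ∈ (0,1] such that V'(x) > β for x ∈ [0,a_c), V'(x) < β for x ∈ (a_c,b), and V'(x) = β for x ≥ b, and such that ∫_{a_c}^{b} (β − V'(x)) dx = χ for some χ > 0. Then for every x ≥ 0, sup over ξ ∈ (0,x] of (βξ − χ + V(x−ξ) − V(x)) ≤ 0, with equality (value 0 attained) when x ≥ b. -/
open Real Set

theorem verification_H2
    (V V' : ℝ → ℝ) (a_c b β χ : ℝ)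
    (hd : ∀ x ∈ Set.Ici (0:ℝ), HasDerivWithinAt V (V' x) (Set.Ici 0) x)
    (hc : ContinuousOn V' (Set.Ici 0))
    (hV0 : V 0 = 0)
    (hac : 0 ≤ a_c) (hacb : a_c < b)
    (hβ0 : 0 < β) (hβ1 : β ≤ 1) (hχ : 0 < χ)
    (h1 : ∀ x ∈ Set.Ico 0 a_c, β < V' x)
    (h2 : ∀ x ∈ Set.Ioo a_c b, V' x < β)
    (h3 : ∀ x ∈ Set.Ici b, V' x = β)
    (hint : ∫ x in a_c..b, (β - V' x) = χ) :
    ∀ x : ℝ, 0 ≤ x →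
      (∀ ξ ∈ Set.Ioc (0:ℝ) x, β * ξ - χ + V (x - ξ) - V x ≤ 0) ∧
      (b ≤ x → ∃ ξ ∈ Set.Ioc (0:ℝ) x, β * ξ - χ + V (x - ξ) - V x = 0) := by
  set W : ℝ → ℝ := fun t => V t - β * t with hWdef
  have hb0 : 0 < b := lt_of_le_of_lt hac hacb
  have hVcont : ContinuousOn V (Ici 0) := fun x hx => (hd x hx).continuousWithinAt
  have hWcont : ContinuousOn W (Ici 0) :=
    hVcont.sub (continuous_const.mul continuous_id).continuousOn
  have hWd : ∀ x : ℝ, 0 < x → HasDerivAt W (V' x - β) x := by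
    intro x hx
    have hV : HasDerivAt V (V' x) x := (hd x hx.le).hasDerivAt (Ici_mem_nhds hx)
    have hlin : HasDerivAt (fun t : ℝ => β * t) β x := by
      simpa using (hasDerivAt_id x).const_mul β
    exact hV.sub hlin
  have hderivW : ∀ x : ℝ, 0 < x → deriv W x = V' x - β := fun x hx => (hWd x hx).deriv
  -- monotone on [0, a_c]
  have M1 : MonotoneOn W (Icc 0 a_c) := by
    apply monotoneOn_of_deriv_nonneg (convex_Icc _ _)
      (hWcont.mono (Icc_subset_Ici_self))
    · intro x hx
      rw [interior_Icc] at hx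
      exact ((hWd x hx.1).differentiableAt.differentiableWithinAt)
    · intro x hx
      rw [interior_Icc] at hx
      rw [hderivW x hx.1]
      have := h1 x ⟨hx.1.le, hx.2⟩
      linarith
  -- antitone on [a_c, b]
  have hsub2 : Icc a_c b ⊆ Ici 0 := fun y hy => le_trans hac hy.1
  have M2 : AntitoneOn W (Icc a_c b) := by
    apply antitoneOn_of_deriv_nonpos (convex_Icc _ _)
      (hWcont.mono hsub2)
    · intro x hx
      rw [interior_Icc] at hx
      exact ((hWd x (lt_of_le_of_lt hac hx.1)).differentiableAt.differentiableWithinAt)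
    · intro x hx
      rw [interior_Icc] at hx
      rw [hderivW x (lt_of_le_of_lt hac hx.1)]
      have := h2 x hx
      linarith
  -- constant on [b, ∞)
  have M3 : ∀ x : ℝ, b ≤ x → W x = W b := by
    have hcb : ContinuousOn W (Ici b) := hWcont.mono (Ici_subset_Ici.mpr hb0.le)
    have hdiff : DifferentiableOn ℝ W (interior (Ici b)) := by
      intro x hx
      rw [interior_Ici] at hx
      exact ((hWd x (lt_trans hb0 hx)).differentiableAt.differentiableWithinAt)
    have hzero : ∀ x ∈ interior (Ici b), deriv W x = 0 := by
      intro x hx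
      rw [interior_Ici] at hx
      rw [hderivW x (lt_trans hb0 hx), h3 x (mem_Ici.mpr (le_of_lt hx))]
      ring
    have hmono : MonotoneOn W (Ici b) :=
      monotoneOn_of_deriv_nonneg (convex_Ici b) hcb hdiff fun x hx => le_of_eq (hzero x hx).symm
    have hanti : AntitoneOn W (Ici b) :=
      antitoneOn_of_deriv_nonpos (convex_Ici b) hcb hdiff fun x hx => le_of_eq (hzero x hx)
    intro x hx
    exact le_antisymm (hanti self_mem_Ici hx hx) (hmono self_mem_Ici hx hx)
  -- FTC and the key identity
  have hsub := hsub2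
  have hV'int : IntervalIntegrable V' MeasureTheory.volume a_c b :=
    (hc.mono hsub).intervalIntegrable_of_Icc hacb.le
  have hftc : ∫ x in a_c..b, V' x = V b - V a_c := by
    apply intervalIntegral.integral_eq_sub_of_hasDeriv_right_of_le hacb.le
      (hVcont.mono hsub) _ hV'int
    intro x hx
    have hx0 : (0:ℝ) ≤ x := le_trans hac hx.1.le
    exact (hd x hx0).mono (fun y hy => le_trans hx0 hy.le)
  have hkey : W a_c - W b = χ := by
    have hβint : ∫ x in a_c..b, (β - V' x) = β * (b - a_c) - (V b - V a_c) := by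
      rw [intervalIntegral.integral_sub intervalIntegrable_const hV'int, hftc,
        intervalIntegral.integral_const, smul_eq_mul]
      ring
    simp only [hWdef]
    rw [hβint] at hint
    linarith
  -- W t ≤ W a_c for t ≥ 0
  have hWmax : ∀ t : ℝ, 0 ≤ t → W t ≤ W a_c := by
    intro t ht
    rcases le_or_gt t a_c with h | h
    · exact M1 ⟨ht, h⟩ ⟨hac, le_refl _⟩ h
    · rcases le_or_gt t b with h' | h'
      · exact M2 ⟨le_refl _, hacb.le⟩ ⟨h.le, h'⟩ h.le
      · rw [M3 t h'.le]
        exact M2 ⟨le_refl _, hacb.le⟩ ⟨hacb.le, le_refl _⟩ hacb.le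
  -- W b ≤ W x for x ≥ a_c
  have hWmin : ∀ x : ℝ, a_c ≤ x → W b ≤ W x := by
    intro x hx
    rcases le_or_gt x b with h | h
    · exact M2 ⟨hx, h⟩ ⟨hacb.le, le_refl _⟩ h
    · rw [M3 x h.le]
  intro x hx
  have hexpr : ∀ ξ : ℝ, β * ξ - χ + V (x - ξ) - V x = W (x - ξ) - W x - χ := by
    intro ξ
    simp only [hWdef]
    ring
  constructor
  · intro ξ hξ
    rw [hexpr ξ]
    have ht0 : 0 ≤ x - ξ := sub_nonneg.mpr hξ.2
    rcases le_or_gt x a_c with hxa | hxa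
    · have : W (x - ξ) ≤ W x := M1 ⟨ht0, by linarith [hξ.1]⟩ ⟨hx, hxa⟩ (by linarith [hξ.1])
      linarith
    · have h5 := hWmax (x - ξ) ht0
      have h6 := hWmin x hxa.le
      linarith
  · intro hbx
    refine ⟨x - a_c, ⟨by linarith, by linarith⟩, ?_⟩
    rw [hexpr (x - a_c)]
    have : x - (x - a_c) = a_c := by ring
    rw [this, M3 x hbx]
    linarith
end
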